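/- Let u = D^ī(x)·v ∈ T with D^ī(x) = D_{i1}⋯D_{im}(x), and let D^j̄ = D_{j1}⋯D_{jn} be a composite of differential operators. Then the leading term of D^j̄(u) in D(X) is d^j̄(u) := D_{j1}⋯D_{jn}D_{i1}⋯D_{im}(x)·v. -/

import Mathlib

/-- A letter `D^ī(x)` of the free differential algebra: the word `ī` of operator
indices together with the generator `x`. -/
abbrev Letter (J X : Type*) := List J × X

variable {k J X : Type*} [CommRing k]

/-- The monomial of `D(X) = k⟨(D^ω(X))^*⟩` corresponding to a word `u ∈ T`. -/
noncomputable def monoW (u : List (Letter J X)) : MonoidAlgebra k (FreeMonoid (Letter J X)) :=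
  MonoidAlgebra.single (FreeMonoid.ofList u) 1

/-- Action of the derivation `D_j` on a word, defined by the Leibniz rule. -/
noncomputable def derivMon (j : J) : List (Letter J X) → MonoidAlgebra k (FreeMonoid (Letter J X))
  | [] => 0
  | (a, x) :: v =>
      monoW ((j :: a, x) :: v) + monoW [(a, x)] * derivMon j v

/-- The derivation `D_j` on the free differential algebra `D(X)`. -/
noncomputable def Dop (j : J) :
    MonoidAlgebra k (FreeMonoid (Letter J X)) →ₗ[k] MonoidAlgebra k (FreeMonoid (Letter J X)) :=
  (Finsupp.lsum k fun u =>
    LinearMap.toSpanSingleton k (MonoidAlgebra k (FreeMonoid (Letter J X))) (derivMon j u.toList)).comp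
    (MonoidAlgebra.coeffLinearEquiv k).toLinearMap

/-- The composite operator `D^j̄ = D_{j₁} ∘ ⋯ ∘ D_{jₙ}`. -/
noncomputable def Dops (jb : List J) :
    MonoidAlgebra k (FreeMonoid (Letter J X)) →ₗ[k] MonoidAlgebra k (FreeMonoid (Letter J X)) :=
  jb.foldr (fun j m => (Dop j).comp m) LinearMap.id

/-- `d^j̄(u)`: prepend the operator word `j̄` to the first letter of `u`. -/
def dHat (jb : List J) : List (Letter J X) → List (Letter J X)
  | [] => []
  | (a, x) :: v => (jb ++ a, x) :: v

/-- Coefficient of the word `u` in `f ∈ D(X)`. -/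
noncomputable def coeffW (f : MonoidAlgebra k (FreeMonoid (Letter J X)))
    (u : List (Letter J X)) : k := f.coeff (FreeMonoid.ofList u)

section Order
variable [LinearOrder J] [LinearOrder X]

/-- The order on letters: compare `wt(D^ī(x)) = (x; m, i₁, …, i_m)` lexicographically. -/
def LetterLt (a b : Letter J X) : Prop :=
  a.2 < b.2 ∨ (a.2 = b.2 ∧ (a.1.length < b.1.length ∨
    (a.1.length = b.1.length ∧ List.Lex (· < ·) a.1 b.1)))

/-- The deg-lex order on words: first by length, then lexicographically. -/
def DegLexLt (u v : List (Letter J X)) : Prop :=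
  u.length < v.length ∨ (u.length = v.length ∧ List.Lex LetterLt u v)

/-- `u` is the leading term of `f`. -/
def IsLT (f : MonoidAlgebra k (FreeMonoid (Letter J X))) (u : List (Letter J X)) : Prop :=
  coeffW f u ≠ 0 ∧ ∀ v, coeffW f v ≠ 0 → v ≠ u → DegLexLt v u

/-- `f` is monic with leading term `u`. -/
def MonicW (f : MonoidAlgebra k (FreeMonoid (Letter J X))) (u : List (Letter J X)) : Prop :=
  IsLT f u ∧ coeffW f u = 1

end Order

/-- Membership in the `D`-ideal generated by `S`. -/
inductive InDIdeal (S : Set (MonoidAlgebra k (FreeMonoid (Letter J X)))) :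
    MonoidAlgebra k (FreeMonoid (Letter J X)) → Prop
  | of : ∀ s ∈ S, InDIdeal S s
  | zero : InDIdeal S 0
  | add : ∀ {a b}, InDIdeal S a → InDIdeal S b → InDIdeal S (a + b)
  | smul : ∀ (c : k) {a}, InDIdeal S a → InDIdeal S (c • a)
  | mul_left : ∀ (g) {a}, InDIdeal S a → InDIdeal S (g * a)
  | mul_right : ∀ (g) {a}, InDIdeal S a → InDIdeal S (a * g)
  | deriv : ∀ (j : J) {a}, InDIdeal S a → InDIdeal S (Dop j a)

/-- `(S,𝒟)`-words: `a · D^j̄(s) · b` with `s ∈ S`. -/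
def IsSDWord (S : Set (MonoidAlgebra k (FreeMonoid (Letter J X))))
    (g : MonoidAlgebra k (FreeMonoid (Letter J X))) : Prop :=
  ∃ (a b : List (Letter J X)) (jb : List J), ∃ s ∈ S, g = monoW a * Dops jb s * monoW b

section Order2
variable [LinearOrder J] [LinearOrder X]

/-- `f ≡ 0 mod (S, w)`: `f` is a linear combination of `(S,𝒟)`-words with leading term `< w`. -/
def TrivMod (S : Set (MonoidAlgebra k (FreeMonoid (Letter J X))))
    (w : List (Letter J X)) (f : MonoidAlgebra k (FreeMonoid (Letter J X))) : Prop :=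
  f ∈ Submodule.span k {g | IsSDWord S g ∧ ∃ l, IsLT g l ∧ DegLexLt l w}

/-- `S` is a Gröbner–Shirshov basis: all compositions of elements of `S` are trivial. -/
def IsGSB (S : Set (MonoidAlgebra k (FreeMonoid (Letter J X)))) : Prop :=
  ∀ f ∈ S, ∀ g ∈ S, ∀ fb gb, MonicW f fb → MonicW g gb →
    (∀ a b jb, gb ≠ [] → fb = a ++ dHat jb gb ++ b →
        TrivMod S fb (f - monoW a * Dops jb g * monoW b)) ∧
    (∀ ib b, fb ≠ [] → dHat ib fb = gb ++ b →
        TrivMod S (dHat ib fb) (Dops ib f - g * monoW b)) ∧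
    (∀ a b jb, a ≠ [] → b ≠ [] → fb ≠ [] → gb ≠ [] →
        fb ++ b = a ++ dHat jb gb → (fb ++ b).length < fb.length + gb.length →
        TrivMod S (fb ++ b) (f * monoW b - monoW a * Dops jb g))

/-- `Irr(S)`: words containing no subword `d^ī(s̄)` with `s ∈ S`. -/
def Irr (S : Set (MonoidAlgebra k (FreeMonoid (Letter J X)))) : Set (List (Letter J X)) :=
  {u | ¬ ∃ (a b : List (Letter J X)) (ib : List J), ∃ s ∈ S, ∃ sb, IsLT s sb ∧
        u = a ++ dHat ib sb ++ b}

end Order2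

/-- The `D`-ideal generated by `S`, as a `k`-submodule of `D(X)`. -/
noncomputable def DIdealSub (S : Set (MonoidAlgebra k (FreeMonoid (Letter J X)))) :
    Submodule k (MonoidAlgebra k (FreeMonoid (Letter J X))) where
  carrier := {f | InDIdeal S f}
  add_mem' := fun h1 h2 => InDIdeal.add h1 h2
  zero_mem' := InDIdeal.zero
  smul_mem' := fun c _ h => InDIdeal.smul c h

lemma coeffW_add (f g : MonoidAlgebra k (FreeMonoid (Letter J X))) (w : List (Letter J X)) :
    coeffW (f + g) w = coeffW f w + coeffW g w := rfl

lemma Dop_monoW (j : J) (u : List (Letter J X)) :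
    Dop j (monoW u : MonoidAlgebra k (FreeMonoid (Letter J X))) = derivMon j u := by
  rw [Dop, monoW, LinearMap.comp_apply]
  erw [Finsupp.lsum_single]
  simp

lemma single_mul_eq (l : Letter J X) (g : MonoidAlgebra k (FreeMonoid (Letter J X))) :
    (monoW [l] : MonoidAlgebra k (FreeMonoid (Letter J X))) * g =
      MonoidAlgebra.ofCoeff (Finsupp.mapDomain (fun m => FreeMonoid.ofList [l] * m) g.coeff) := by
  induction g using MonoidAlgebra.induction with
  | zero => simp
  | single_add a b f _ _ ih =>
      rw [mul_add, ih, MonoidAlgebra.coeff_add, Finsupp.mapDomain_add, MonoidAlgebra.ofCoeff_add,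
        MonoidAlgebra.coeff_single, Finsupp.mapDomain_single]
      congr 1
      rw [monoW, MonoidAlgebra.single_mul_single, one_mul]; rfl

lemma coeff_single_mul {l : Letter J X} {g : MonoidAlgebra k (FreeMonoid (Letter J X))}
    {w : List (Letter J X)} (h : coeffW ((monoW [l]) * g) w ≠ 0) :
    ∃ v', w = l :: v' ∧ coeffW g v' ≠ 0 := by
  rw [coeffW, single_mul_eq] at h
  rw [MonoidAlgebra.coeff_ofCoeff, Finsupp.mapDomain, Finsupp.sum_apply] at h
  obtain ⟨m, hm, hne⟩ := Finset.exists_ne_zero_of_sum_ne_zero h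
  by_cases heq : FreeMonoid.ofList [l] * m = FreeMonoid.ofList w
  · refine ⟨FreeMonoid.toList m, ?_, ?_⟩
    · have := FreeMonoid.ofList.injective heq
      simpa using this.symm
    · simpa [coeffW] using Finsupp.mem_support_iff.mp hm
  · exact absurd (Finsupp.single_eq_of_ne' heq) hne

lemma coeff_Dop {j : J} {r : MonoidAlgebra k (FreeMonoid (Letter J X))}
    {w : List (Letter J X)} (h : coeffW (Dop j r) w ≠ 0) :
    ∃ u : List (Letter J X), coeffW r u ≠ 0 ∧
      coeffW (derivMon j u : MonoidAlgebra k (FreeMonoid (Letter J X))) w ≠ 0 := by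
  rw [Dop, coeffW] at h
  erw [LinearMap.comp_apply, Finsupp.lsum_apply, MonoidAlgebra.coeff_finsuppSum, Finsupp.sum_apply] at h
  obtain ⟨m, hm, hne⟩ := Finset.exists_ne_zero_of_sum_ne_zero h
  refine ⟨FreeMonoid.toList m, ?_, ?_⟩
  · simpa [coeffW] using Finsupp.mem_support_iff.mp hm
  · intro h0
    apply hne
    simp only [LinearMap.toSpanSingleton_apply]
    show r.coeff m • (derivMon j (FreeMonoid.toList m) : MonoidAlgebra k (FreeMonoid (Letter J X))).coeff (FreeMonoid.ofList w) = 0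
    rw [coeffW] at h0
    rw [h0, smul_zero]

lemma coeffW_monoW_self (u : List (Letter J X)) :
    coeffW (monoW u : MonoidAlgebra k (FreeMonoid (Letter J X))) u = 1 := by
  simp [coeffW, monoW]

lemma eq_of_coeffW_monoW {u w : List (Letter J X)}
    (h : coeffW (monoW u : MonoidAlgebra k (FreeMonoid (Letter J X))) w ≠ 0) : w = u := by
  by_contra hne
  exact h (Finsupp.single_eq_of_ne' (fun hh => hne (FreeMonoid.ofList.injective hh).symm))

lemma or_of_coeffW_add {f g : MonoidAlgebra k (FreeMonoid (Letter J X))}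
    {w : List (Letter J X)} (h : coeffW (f + g) w ≠ 0) :
    coeffW f w ≠ 0 ∨ coeffW g w ≠ 0 := by
  by_contra hc
  push_neg at hc
  rw [coeffW_add, hc.1, hc.2, add_zero] at h
  exact h rfl

lemma derivMon_length {j : J} : ∀ (u w : List (Letter J X)),
    coeffW (derivMon j u : MonoidAlgebra k (FreeMonoid (Letter J X))) w ≠ 0 →
    w.length = u.length
  | [], w => by simp [derivMon, coeffW]
  | (a, x) :: v, w => fun h => by
    rw [derivMon] at h
    rcases or_of_coeffW_add h with h1 | h2
    · rw [eq_of_coeffW_monoW h1]; rfl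
    · obtain ⟨v', hw, hv'⟩ := coeff_single_mul h2
      have := derivMon_length v v' hv'
      simp [hw, this]

lemma derivMon_head {j : J} {b : List J} {x : X} {v' w : List (Letter J X)}
    (h : coeffW (derivMon j ((b, x) :: v') : MonoidAlgebra k (FreeMonoid (Letter J X))) w ≠ 0) :
    ∃ b'' v'', w = (b'', x) :: v'' ∧ b''.length ≤ b.length + 1 ∧ v''.length = v'.length := by
  rw [derivMon] at h
  rcases or_of_coeffW_add h with h1 | h2
  · exact ⟨j :: b, v', eq_of_coeffW_monoW h1, le_refl _, rfl⟩
  · obtain ⟨v'', hw, hv⟩ := coeff_single_mul h2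
    exact ⟨b, v'', hw, Nat.le_succ _, derivMon_length v' v'' hv⟩

lemma main_lemma (a : List J) (x : X) (v : List (Letter J X)) : ∀ jb : List J,
    ∃ r : MonoidAlgebra k (FreeMonoid (Letter J X)),
      Dops jb (monoW ((a, x) :: v)) = monoW ((jb ++ a, x) :: v) + r ∧
      ∀ w, coeffW r w ≠ 0 → ∃ b'' v'', w = (b'', x) :: v'' ∧
        b''.length < jb.length + a.length ∧ v''.length = v.length
  | [] => ⟨0, by simp [Dops], fun w h => absurd rfl h⟩
  | j :: jb => by
    obtain ⟨r, hr, hgood⟩ := main_lemma a x v jb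
    refine ⟨monoW [(jb ++ a, x)] * derivMon j v + Dop j r, ?_, ?_⟩
    · have : Dops (j :: jb) (monoW ((a, x) :: v) : MonoidAlgebra k (FreeMonoid (Letter J X)))
          = Dop j (Dops jb (monoW ((a, x) :: v))) := rfl
      rw [this, hr, map_add, Dop_monoW, derivMon, add_assoc]; rfl
    · intro w hw
      rcases or_of_coeffW_add hw with h1 | h2
      · obtain ⟨v'', hweq, hv⟩ := coeff_single_mul h1
        refine ⟨jb ++ a, v'', hweq, ?_, derivMon_length v v'' hv⟩
        simp only [List.length_append, List.length_cons]; omega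
      · obtain ⟨u, hu, hd⟩ := coeff_Dop h2
        obtain ⟨b'', v'', hueq, hb, hv⟩ := hgood u hu
        rw [hueq] at hd
        obtain ⟨b''', v''', hweq, hb3, hv3⟩ := derivMon_head hd
        refine ⟨b''', v''', hweq, ?_, hv3.trans hv⟩
        simp only [List.length_cons]; omega

/-- The leading term of `D^j̄(D^ī(x)·v)` is `d^j̄(D^ī(x)·v) = D_{j₁}⋯D_{jₙ}D_{i₁}⋯D_{i_m}(x)·v`. -/
theorem stmt6 [LinearOrder J] [LinearOrder X] [Nontrivial k]
    (jb a : List J) (x : X) (v : List (Letter J X)) :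
    IsLT (Dops jb (monoW ((a, x) :: v) : MonoidAlgebra k (FreeMonoid (Letter J X))))
      (dHat jb ((a, x) :: v)) := by
  obtain ⟨r, hr, hgood⟩ := main_lemma (k := k) a x v jb
  have hlead : dHat jb ((a, x) :: v) = (jb ++ a, x) :: v := rfl
  have hr0 : coeffW r ((jb ++ a, x) :: v) = 0 := by
    by_contra h
    obtain ⟨b'', v'', heq, hb, _⟩ := hgood _ h
    injection heq with h1 h2
    have hb' : b'' = jb ++ a := (congrArg Prod.fst h1).symm
    rw [hb'] at hb
    simp only [List.length_append] at hb
    omega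
  rw [hlead, hr]
  constructor
  · rw [coeffW_add, coeffW_monoW_self, hr0, add_zero]
    exact one_ne_zero
  · intro v0 hv0 hne
    have hm0 : coeffW (monoW ((jb ++ a, x) :: v) : MonoidAlgebra k (FreeMonoid (Letter J X))) v0 = 0 := by
      by_contra h
      exact hne (eq_of_coeffW_monoW h)
    rw [coeffW_add, hm0, zero_add] at hv0
    obtain ⟨b'', v'', heq, hb, hv⟩ := hgood _ hv0
    rw [heq]
    refine Or.inr ⟨by simp [hv], List.Lex.rel ?_⟩
    refine Or.inr ⟨rfl, Or.inl ?_⟩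
    simp only [List.length_append]
    omega
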